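/- Let (u_k) be a sequence of positive reals and let (y_n) be the symmetric series built from (u_k), i.e. y_{2k−1} = u_k and y_{2k} = −u_k. Suppose the set X = {u_k : k ∈ ℕ} ∪ {−u_k : k ∈ ℕ} of values of the series is ε-separated for some ε > 0, and suppose there exists at least one value of infinite order (i.e. some e ∈ X with {n : y_n = e} infinite). Then SR_2(Σ y_n) = {c_1 e_1 + ⋯ + c_r e_r : r ∈ ℕ, e_1,…,e_r ∈ X each of infinite order, c_1,…,c_r ∈ ℤ, Σ_{j=1}^r c_j is even}. -/

import Mathlib

open Filter Topology

/-- The 2n sum range of the series `Σ y_n`. -/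
def SR2 (y : ℕ → ℝ) : Set ℝ :=
  {s : ℝ | ∃ π : Equiv.Perm ℕ,
    Tendsto (fun n : ℕ => ∑ k ∈ Finset.range (2 * n), y (π k)) atTop (nhds s)}

/-- A set `E ⊆ ℝ` is `ε`-separated if all pairwise distances between distinct
elements exceed `ε`. -/
def IsSeparated' (ε : ℝ) (E : Set ℝ) : Prop :=
  ∀ a ∈ E, ∀ b ∈ E, a ≠ b → ε < |a - b|

/-!
Write `y` as the pairs `(y (2k), y (2k+1)) = (u k, -u k)`. If the even partial sums of a
rearrangement converge, consecutive pair sums tend to `0`, and `ε`-separation forces every late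
pair to consist of opposite values, so the partial sums are eventually constant: the limit is the
sum over a finite index set `B` of even size. A value `v` of finite order occurs as often as `-v`
in the whole series and, by the late pairing, in the complement of `B`; hence also in `B`, where
these values cancel and fill an even number of places. What is left is a sum of an even number of
infinite-order values.

Conversely, such a sum is realised by putting indices carrying these values first and then pairing
the remaining indices as `v ↔ -v`: for each `v` the remaining indices of value `v` and `-v` are
either both countably infinite or the untouched (finite) fibers, which `k ↦ k xor 1` matches.
-/

def pairSwap (n : ℕ) : ℕ := if n % 2 = 0 then n + 1 else n - 1

lemma pairSwap_involutive : Function.Involutive pairSwap := by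
  intro n
  unfold pairSwap
  split_ifs <;> omega

lemma pairSwap_two_mul (k : ℕ) : pairSwap (2 * k) = 2 * k + 1 := by
  simp [pairSwap]

lemma pairSwap_two_mul_add_one (k : ℕ) : pairSwap (2 * k + 1) = 2 * k := by
  simp [pairSwap, Nat.add_mod]

lemma two_mul_le_pairSwap_iff {m n : ℕ} : 2 * m ≤ pairSwap n ↔ 2 * m ≤ n := by
  unfold pairSwap
  split_ifs <;> omega

section AntisymmetricOff

variable {α β : Type*} [InvolutiveNeg β] {z : α → β} {σ : α → α}

lemma image_fiber_diff_eq (hσ : Function.Involutive σ) {B : Set α}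
    (hB : ∀ a ∉ B, σ a ∉ B) (hz : ∀ a ∉ B, z (σ a) = -z a) (v : β) :
    σ '' ({a | z a = v} \ B) = {a | z a = -v} \ B := by
  ext b
  constructor
  · rintro ⟨a, ⟨rfl, ha⟩, rfl⟩
    exact ⟨hz a ha, hB a ha⟩
  · rintro ⟨hb, hbB⟩
    refine ⟨σ b, ⟨?_, hB b hbB⟩, hσ b⟩
    change z b = -v at hb
    change z (σ b) = v
    rw [hz b hbB, hb, neg_neg]

lemma count_neg_map_eq_count [DecidableEq β] (hσ : Function.Involutive σ) {B : Finset α}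
    (hB : ∀ a ∉ B, σ a ∉ B) (hz : ∀ a ∉ B, z (σ a) = -z a) {v : β}
    (hfin : {a | z a = v}.Finite) (hcard : {a | z a = -v}.ncard = {a | z a = v}.ncard) :
    (B.val.map z).count (-v) = (B.val.map z).count v := by
  have hcount : ∀ w, (B.val.map z).count w = ({a | z a = w} ∩ ↑B).ncard := by
    intro w
    rw [Multiset.count_map, ← Finset.filter_val, Finset.card_val, ← Set.ncard_coe_finset,
      Finset.coe_filter]
    congr 1
    ext a
    simp [eq_comm, and_comm]
  have himage := image_fiber_diff_eq hσ (B := ↑B) hB hz v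
  have hfin' : {a | z a = -v}.Finite :=
    (B.finite_toSet.union ((hfin.sdiff (t := ↑B)).image σ)).subset fun a ha => by
      by_cases haB : a ∈ B
      · exact Or.inl haB
      · exact Or.inr (himage ▸ ⟨ha, haB⟩)
  have hdiff : ({a | z a = -v} \ ↑B).ncard = ({a | z a = v} \ ↑B).ncard := by
    rw [← himage, Set.ncard_image_of_injective _ hσ.injective]
  have hv := Set.ncard_inter_add_ncard_sdiff_eq_ncard {a | z a = v} ↑B hfin
  have hv' := Set.ncard_inter_add_ncard_sdiff_eq_ncard {a | z a = -v} ↑B hfin'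
  rw [hcount, hcount]
  omega

end AntisymmetricOff

lemma Multiset.eq_filter_pos_add_map_neg {α : Type*} [AddCommGroup α] [LinearOrder α]
    [IsOrderedAddMonoid α] {M : Multiset α} (hM : M.map Neg.neg = M) (h0 : (0 : α) ∉ M) :
    M = M.filter (0 < ·) + (M.filter (0 < ·)).map Neg.neg := by
  have hnonpos : M.filter (¬ 0 < ·) = (M.filter (0 < ·)).map Neg.neg := by
    conv_lhs => rw [← hM]
    rw [Multiset.filter_map]
    congr 1
    refine Multiset.filter_congr fun a ha => ?_
    have ha0 : 0 ≠ a := fun h => h0 (h ▸ ha)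
    simp only [Function.comp_apply, not_lt, neg_nonpos]
    exact ha0.le_iff_lt
  rw [← hnonpos, Multiset.filter_add_not]

lemma Multiset.even_card_filter_and_sum_filter_eq {α : Type*} [AddCommGroup α] [LinearOrder α]
    [IsOrderedAddMonoid α] {M : Multiset α} (p : α → Prop) [DecidablePred p]
    (hM : (M.filter (¬ p ·)).map Neg.neg = M.filter (¬ p ·)) (h0 : (0 : α) ∉ M)
    (heven : Even (Multiset.card M)) :
    Even (Multiset.card (M.filter p)) ∧ (M.filter p).sum = M.sum := by
  have hdecomp := Multiset.eq_filter_pos_add_map_neg hM fun h => h0 (Multiset.mem_of_mem_filter h)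
  have hsplit := Multiset.filter_add_not p M
  rw [hdecomp] at hsplit
  rw [← hsplit, Multiset.card_add, Multiset.card_add, Multiset.card_map, ← two_mul,
    Nat.even_add] at heven
  refine ⟨heven.2 (even_two_mul _), ?_⟩
  conv_rhs => rw [← hsplit, Multiset.sum_add, Multiset.sum_add, Multiset.sum_map_neg',
    add_neg_cancel, add_zero]

lemma eq_neg_of_abs_add_le {ε : ℝ} {E : Set ℝ} (hsep : IsSeparated' ε E) {a b : ℝ}
    (ha : -a ∈ E) (hb : b ∈ E) (h : |a + b| ≤ ε) : b = -a := by
  by_contra hne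
  have := hsep b hb (-a) ha hne
  rw [sub_neg_eq_add, add_comm] at this
  linarith

lemma exists_finset_map_eq {α β : Type*} {z : α → β} (M : Multiset β)
    (hM : ∀ v ∈ M, {a | z a = v}.Infinite) : ∃ B : Finset α, B.val.map z = M := by
  classical
  induction M using Multiset.induction_on with
  | empty => exact ⟨∅, rfl⟩
  | cons v M ih =>
    obtain ⟨B, hB⟩ := ih fun w hw => hM w (Multiset.mem_cons_of_mem hw)
    obtain ⟨a, ha, haB⟩ := (hM v (Multiset.mem_cons_self v M)).exists_notMem_finset B
    have ha : z a = v := ha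
    exact ⟨insert a B, by rw [Finset.insert_val_of_notMem haB, Multiset.map_cons, hB, ha]⟩

lemma exists_pairing {α : Type*} [Countable α] [Infinite α] {z : α → ℝ} (hz : ∀ a, z a ≠ 0)
    (hfib : ∀ c, 0 < c → Nonempty ({a // z a = c} ≃ {a // z a = -c})) :
    ∃ e : ℕ ⊕ ℕ ≃ α, ∀ j, z (e (.inl j)) + z (e (.inr j)) = 0 := by
  classical
  have hfiber : ∀ c, Nonempty ({p : {a // 0 < z a} // z p = c} ≃
      {q : {a // ¬ 0 < z a} // -z q = c}) := by
    intro c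
    by_cases hc : 0 < c
    · obtain ⟨e⟩ := hfib c hc
      have hneg : ∀ {a}, -z a = c → ¬ 0 < z a := fun h => by linarith
      exact ⟨(Equiv.subtypeSubtypeEquivSubtype fun h => h ▸ hc).trans <| e.trans <|
        (Equiv.subtypeEquivRight fun a => neg_eq_iff_eq_neg).symm.trans
        (Equiv.subtypeSubtypeEquivSubtype hneg).symm⟩
    · have : IsEmpty {p : {a // 0 < z a} // z p = c} := ⟨fun p => hc (p.2 ▸ p.1.2)⟩
      have : IsEmpty {q : {a // ¬ 0 < z a} // -z q = c} :=
        ⟨fun q => hz q.1 (by have := q.1.2; have := q.2; push Not at *; linarith)⟩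
      exact ⟨Equiv.equivOfIsEmpty _ _⟩
  set β := Equiv.ofFiberEquiv fun c => (hfiber c).some
  have hβ : ∀ p, z (β p) = -z p := fun p => by
    rw [← Equiv.ofFiberEquiv_map (fun c => (hfiber c).some) p, neg_neg]
  set e₀ : {a // 0 < z a} ⊕ {a // 0 < z a} ≃ α :=
    (Equiv.sumCongr (Equiv.refl _) β).trans (Equiv.sumCompl _)
  have : Infinite {a // 0 < z a} := by
    rcases infinite_sum.1 (e₀.infinite_iff.2 ‹_›) with h | h <;> exact h
  obtain ⟨_⟩ := nonempty_denumerable {a // 0 < z a}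
  set d := (Denumerable.eqv {a // 0 < z a}).symm
  refine ⟨(Equiv.sumCongr d d).trans e₀, fun j => ?_⟩
  simp [e₀, hβ]

lemma mem_SR2_of_equiv {y : ℕ → ℝ} {m : ℕ} (hm : Even m) (g : Fin m ⊕ (ℕ ⊕ ℕ) ≃ ℕ)
    (hg : ∀ j, y (g (.inr (.inl j))) + y (g (.inr (.inr j))) = 0) :
    ∑ i, y (g (.inl i)) ∈ SR2 y := by
  set ι : Fin m ⊕ (ℕ ⊕ ℕ) ≃ ℕ :=
    (Equiv.sumCongr (Equiv.refl _) Equiv.natSumNatEquivNat).trans (finSumNatEquiv m)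
  set π : Equiv.Perm ℕ := ι.symm.trans g
  have hπ : ∀ x, π (ι x) = g x := fun x => by simp [π]
  have hprefix : ∀ j, ∑ k ∈ Finset.range (m + 2 * j), y (π k) = ∑ i, y (g (.inl i)) := by
    intro j
    induction j with
    | zero =>
      rw [mul_zero, add_zero, ← Fin.sum_univ_eq_sum_range]
      exact Finset.sum_congr rfl fun i _ => congrArg y (hπ (.inl i))
    | succ j ih =>
      have h₁ : ι (.inr (.inl j)) = m + 2 * j := by simp [ι]
      have h₂ : ι (.inr (.inr j)) = m + 2 * j + 1 := by simp [ι, add_assoc]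
      rw [show m + 2 * (j + 1) = m + 2 * j + 1 + 1 by ring, Finset.sum_range_succ,
        Finset.sum_range_succ, ih, ← h₂, ← h₁, hπ, hπ, add_assoc, hg, add_zero]
  obtain ⟨half, rfl⟩ := hm
  refine ⟨π, tendsto_atTop_of_eventually_const (i₀ := half) fun n hn => ?_⟩
  rw [show 2 * n = half + half + 2 * (n - half) by omega, hprefix]

lemma even_sum_natAbs_iff {ι : Type*} (s : Finset ι) (c : ι → ℤ) :
    Even (∑ i ∈ s, (c i).natAbs) ↔ Even (∑ i ∈ s, c i) := by
  classical
  induction s using Finset.induction_on with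
  | empty => simp
  | insert i s hi ih =>
    rw [Finset.sum_insert hi, Finset.sum_insert hi, Nat.even_add, Int.even_add, ih,
      Int.natAbs_even]

lemma exists_intCombination_iff_exists_multiset {R : Type*} [Ring R] {S : Set R}
    (hS : ∀ v ∈ S, -v ∈ S) (s : R) :
    (∃ (r : ℕ) (e : Fin r → R) (c : Fin r → ℤ), (∀ i, e i ∈ S) ∧ Even (∑ i, c i) ∧
      s = ∑ i, (c i : R) * e i) ↔
    ∃ M : Multiset R, (∀ v ∈ M, v ∈ S) ∧ Even (Multiset.card M) ∧ M.sum = s := by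
  constructor
  · rintro ⟨r, e, c, he, heven, rfl⟩
    -- `c i • e i` as `|c i|` copies of `± e i`
    refine ⟨∑ i, Multiset.replicate (c i).natAbs (if 0 ≤ c i then e i else -e i), ?_, ?_, ?_⟩
    · intro v hv
      obtain ⟨i, -, hi⟩ := Multiset.mem_sum.1 hv
      rw [Multiset.eq_of_mem_replicate hi]
      split_ifs
      exacts [he i, hS _ (he i)]
    · rwa [Multiset.card_sum, Finset.sum_congr rfl fun i _ => Multiset.card_replicate _ _,
        even_sum_natAbs_iff]
    · rw [Multiset.sum_sum]
      refine Finset.sum_congr rfl fun i _ => ?_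
      rw [Multiset.sum_replicate, nsmul_eq_mul, Nat.cast_natAbs]
      split_ifs with hc
      · rw [abs_of_nonneg hc]
      · rw [abs_of_neg (not_le.1 hc), Int.cast_neg, neg_mul_neg]
  · rintro ⟨M, hM, heven, rfl⟩
    refine ⟨M.toList.length, fun i => M.toList[i], fun _ => 1, fun i => hM _ ?_, ?_, ?_⟩
    · exact Multiset.mem_toList.1 (List.getElem_mem _)
    · simpa [Multiset.length_toList] using heven
    · simp [Fin.sum_univ_getElem]

section SymmetricSeries

variable {y : ℕ → ℝ} (hsym : ∀ n, y (pairSwap n) = -y n)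
include hsym

lemma image_pairSwap_fiber (v : ℝ) : pairSwap '' {n | y n = v} = {n | y n = -v} := by
  simpa using image_fiber_diff_eq pairSwap_involutive (B := ∅) (by simp) (fun n _ => hsym n) v

lemma fiber_neg_infinite_iff (v : ℝ) : {n | y n = -v}.Infinite ↔ {n | y n = v}.Infinite := by
  rw [← image_pairSwap_fiber hsym, Set.infinite_image_iff pairSwap_involutive.injective.injOn]

lemma ncard_fiber_neg (v : ℝ) : {n | y n = -v}.ncard = {n | y n = v}.ncard := by
  rw [← image_pairSwap_fiber hsym, Set.ncard_image_of_injective _ pairSwap_involutive.injective]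

lemma exists_tail_cancel_of_tendsto {ε : ℝ} (hε : 0 < ε) (hsep : IsSeparated' ε (Set.range y))
    {π : Equiv.Perm ℕ} {s : ℝ}
    (h : Tendsto (fun n => ∑ k ∈ Finset.range (2 * n), y (π k)) atTop (𝓝 s)) :
    ∃ N, s = ∑ k ∈ Finset.range (2 * N), y (π k) ∧
      ∀ k, 2 * N ≤ k → y (π (pairSwap k)) = -y (π k) := by
  set S := fun n => ∑ k ∈ Finset.range (2 * n), y (π k)
  have hstep : ∀ n, S (n + 1) = S n + (y (π (2 * n)) + y (π (2 * n + 1))) := by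
    intro n
    simp only [S]
    rw [show 2 * (n + 1) = 2 * n + 1 + 1 by ring, Finset.sum_range_succ, Finset.sum_range_succ,
      add_assoc]
  have hgap : Tendsto (fun n => S (n + 1) - S n) atTop (𝓝 0) := by
    simpa using (h.comp (tendsto_add_atTop_nat 1)).sub h
  obtain ⟨N, hN⟩ := eventually_atTop.1 (hgap.eventually (Metric.closedBall_mem_nhds 0 hε))
  have hcancel : ∀ n ≥ N, y (π (2 * n + 1)) = -y (π (2 * n)) := by
    intro n hn
    have hn := hN n hn
    rw [Real.dist_eq, sub_zero, hstep, add_sub_cancel_left] at hn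
    exact eq_neg_of_abs_add_le hsep ⟨_, hsym _⟩ ⟨_, rfl⟩ hn
  have hconst : ∀ n ≥ N, S n = S N := by
    intro n hn
    induction n, hn using Nat.le_induction with
    | base => rfl
    | succ n hn ih => rw [hstep, hcancel n hn, ih, add_neg_cancel, add_zero]
  refine ⟨N, tendsto_nhds_unique h (tendsto_atTop_of_eventually_const hconst), fun k hk => ?_⟩
  obtain ⟨n, rfl | rfl⟩ := Nat.even_or_odd' k
  · rw [pairSwap_two_mul, hcancel n (by omega)]
  · rw [pairSwap_two_mul_add_one, hcancel n (by omega), neg_neg]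

lemma exists_multiset_of_tail_pairing (hne : ∀ n, y n ≠ 0) {σ : ℕ → ℕ}
    (hσ : Function.Involutive σ) {B : Finset ℕ} (hσB : ∀ n ∉ B, σ n ∉ B)
    (hyσ : ∀ n ∉ B, y (σ n) = -y n) (hB : Even B.card) :
    ∃ M : Multiset ℝ, (∀ v ∈ M, {n | y n = v}.Infinite) ∧ Even (Multiset.card M) ∧
      M.sum = ∑ n ∈ B, y n := by
  classical
  set infiniteOrder := fun v : ℝ => {n | y n = v}.Infinite
  set M := B.val.map y
  have hMfin : (M.filter (¬ infiniteOrder ·)).map Neg.neg = M.filter (¬ infiniteOrder ·) := by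
    ext v
    have h := Multiset.count_map_eq_count' Neg.neg (M.filter (¬ infiniteOrder ·))
      neg_injective (-v)
    rw [neg_neg] at h
    rw [h, Multiset.count_filter, Multiset.count_filter]
    simp only [infiniteOrder, fiber_neg_infinite_iff hsym]
    split_ifs with hv
    · rfl
    · exact count_neg_map_eq_count hσ hσB hyσ (Set.not_infinite.1 hv) (ncard_fiber_neg hsym v)
  have h0 : (0 : ℝ) ∉ M := fun h => by
    obtain ⟨n, -, hn⟩ := Multiset.mem_map.1 h
    exact hne n hn
  obtain ⟨heven, hsum⟩ := Multiset.even_card_filter_and_sum_filter_eq infiniteOrder hMfin h0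
    (by simpa [M] using hB)
  exact ⟨M.filter infiniteOrder, fun v hv => (Multiset.mem_filter.1 hv).2, heven,
    hsum.trans (Finset.sum_eq_multiset_sum B y).symm⟩

theorem exists_multiset_of_mem_SR2 {ε : ℝ} (hε : 0 < ε) (hsep : IsSeparated' ε (Set.range y))
    (hne : ∀ n, y n ≠ 0) {s : ℝ} (hs : s ∈ SR2 y) :
    ∃ M : Multiset ℝ, (∀ v ∈ M, {n | y n = v}.Infinite) ∧ Even (Multiset.card M) ∧
      M.sum = s := by
  obtain ⟨π, hπ⟩ := hs
  obtain ⟨N, rfl, htail⟩ := exists_tail_cancel_of_tendsto hsym hε hsep hπ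
  set B := (Finset.range (2 * N)).map π.toEmbedding
  have hmemB : ∀ n, n ∈ B ↔ π.symm n < 2 * N := by simp [B, Finset.mem_map_equiv]
  set σ : ℕ → ℕ := fun n => π (pairSwap (π.symm n))
  have hσ : Function.Involutive σ := fun n => by simp [σ, pairSwap_involutive _]
  have hσB : ∀ n ∉ B, σ n ∉ B := by
    simp only [hmemB, not_lt, σ, Equiv.symm_apply_apply, two_mul_le_pairSwap_iff, imp_self,
      implies_true]
  have hyσ : ∀ n ∉ B, y (σ n) = -y n := fun n hn => by
    simpa [σ] using htail _ (not_lt.1 ((hmemB n).not.1 hn))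
  obtain ⟨M, hM, heven, hsum⟩ :=
    exists_multiset_of_tail_pairing hsym hne hσ hσB hyσ (by simp [B])
  exact ⟨M, hM, heven, hsum.trans (Finset.sum_map _ _ _)⟩

lemma nonempty_fiber_equiv_fiber_neg {B : Finset ℕ} (hB : ∀ n ∈ B, {m | y m = y n}.Infinite)
    (c : ℝ) : Nonempty ({a : ↥(↑B : Set ℕ)ᶜ // y a = c} ≃ {a : ↥(↑B : Set ℕ)ᶜ // y a = -c}) := by
  by_cases hc : {n | y n = c}.Infinite
  · have hinf : ∀ w, {n | y n = w}.Infinite → Infinite {a : ↥(↑B : Set ℕ)ᶜ // y a = w} := by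
      intro w hw
      have : ((↑B : Set ℕ)ᶜ ∩ {n | y n = w}).Infinite := by
        rw [Set.inter_comm, ← Set.sdiff_eq]
        exact hw.sdiff B.finite_toSet
      exact (Equiv.subtypeSubtypeEquivSubtypeInter _ _).infinite_iff.2 this.to_subtype
    have := hinf c hc
    have := hinf (-c) ((fiber_neg_infinite_iff hsym c).2 hc)
    exact Cardinal.eq.1 ((Cardinal.mk_eq_aleph0 _).trans (Cardinal.mk_eq_aleph0 _).symm)
  · -- finite fibers avoid `B`, and `pairSwap` matches them
    have hout : ∀ w, ¬ {n | y n = w}.Infinite → ∀ {n}, y n = w → n ∈ (↑B : Set ℕ)ᶜ :=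
      fun w hw n hn hnB => hw (hn ▸ hB n hnB)
    have hc' : ¬ {n | y n = -c}.Infinite := (fiber_neg_infinite_iff hsym c).not.2 hc
    exact ⟨(Equiv.subtypeSubtypeEquivSubtype (hout c hc)).trans <|
      ((pairSwap_involutive.toPerm _).subtypeEquiv fun n => by simp [hsym]).trans
      (Equiv.subtypeSubtypeEquivSubtype (hout (-c) hc')).symm⟩

theorem multiset_sum_mem_SR2 (hne : ∀ n, y n ≠ 0) (M : Multiset ℝ)
    (hM : ∀ v ∈ M, {n | y n = v}.Infinite) (heven : Even (Multiset.card M)) : M.sum ∈ SR2 y := by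
  classical
  obtain ⟨B, rfl⟩ := exists_finset_map_eq M hM
  have hB : ∀ n ∈ B, {m | y m = y n}.Infinite := fun n hn => hM _ (Multiset.mem_map_of_mem y hn)
  have : Infinite ↥(↑B : Set ℕ)ᶜ := B.finite_toSet.infinite_compl.to_subtype
  obtain ⟨e, he⟩ := exists_pairing (z := fun a : ↥(↑B : Set ℕ)ᶜ => y a) (fun a => hne a)
    fun c _ => nonempty_fiber_equiv_fiber_neg hsym hB c
  have := mem_SR2_of_equiv (y := y) (by simpa using heven)
    ((Equiv.sumCongr (B.equivFin.symm : Fin B.card ≃ (B : Set ℕ)) e).trans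
      (Equiv.Set.sumCompl (B : Set ℕ))) fun j => by
      simp only [Equiv.trans_apply, Equiv.sumCongr_apply, Sum.map_inr]
      rw [Equiv.Set.sumCompl_apply_inr, Equiv.Set.sumCompl_apply_inr]
      exact he j
  convert this using 1
  rw [← Finset.sum_eq_multiset_sum, ← Finset.sum_coe_sort B y]
  exact (Equiv.sum_comp B.equivFin.symm fun x => y x).symm

theorem SR2_eq_setOf_multiset_sum {ε : ℝ} (hε : 0 < ε) (hsep : IsSeparated' ε (Set.range y))
    (hne : ∀ n, y n ≠ 0) :
    SR2 y = {s | ∃ M : Multiset ℝ, (∀ v ∈ M, {n | y n = v}.Infinite) ∧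
      Even (Multiset.card M) ∧ M.sum = s} := by
  ext s
  constructor
  · exact exists_multiset_of_mem_SR2 hsym hε hsep hne
  · rintro ⟨M, hM, heven, rfl⟩
    exact multiset_sum_mem_SR2 hsym hne M hM heven

end SymmetricSeries

lemma range_eq_range_union_range_neg {u y : ℕ → ℝ}
    (hy : ∀ k : ℕ, y (2 * k) = u k ∧ y (2 * k + 1) = -u k) :
    Set.range y = Set.range u ∪ Set.range (fun k => -u k) := by
  ext v
  constructor
  · rintro ⟨n, rfl⟩
    obtain ⟨k, rfl | rfl⟩ := Nat.even_or_odd' n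
    exacts [Or.inl ⟨k, (hy k).1.symm⟩, Or.inr ⟨k, (hy k).2.symm⟩]
  · rintro (⟨k, rfl⟩ | ⟨k, rfl⟩)
    exacts [⟨2 * k, (hy k).1⟩, ⟨2 * k + 1, (hy k).2⟩]

theorem SR2_separated_infinite_order_general (u : ℕ → ℝ) (hu : ∀ k, 0 < u k)
    (y : ℕ → ℝ) (hy : ∀ k : ℕ, y (2 * k) = u k ∧ y (2 * k + 1) = -u k)
    (ε : ℝ) (hε : ε > 0)
    (hsep : IsSeparated' ε (Set.range u ∪ Set.range (fun k => -u k))) :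
    SR2 y = {s : ℝ | ∃ (r : ℕ) (e : Fin r → ℝ) (c : Fin r → ℤ),
      (∀ i, e i ∈ Set.range u ∪ Set.range (fun k => -u k) ∧
        {n : ℕ | y n = e i}.Infinite) ∧
      Even (∑ i, c i) ∧ s = ∑ i, (c i : ℝ) * e i} := by
  rw [← range_eq_range_union_range_neg hy] at hsep ⊢
  have hsym : ∀ n, y (pairSwap n) = -y n := by
    intro n
    obtain ⟨k, rfl | rfl⟩ := Nat.even_or_odd' n
    · rw [pairSwap_two_mul, (hy k).1, (hy k).2]
    · rw [pairSwap_two_mul_add_one, (hy k).1, (hy k).2, neg_neg]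
  have hne : ∀ n, y n ≠ 0 := by
    intro n
    obtain ⟨k, rfl | rfl⟩ := Nat.even_or_odd' n
    · exact (hy k).1 ▸ (hu k).ne'
    · exact (hy k).2 ▸ neg_ne_zero.2 (hu k).ne'
  rw [SR2_eq_setOf_multiset_sum hsym hε hsep hne]
  set S : Set ℝ := {v | v ∈ Set.range y ∧ {n | y n = v}.Infinite}
  have hS : ∀ v ∈ S, -v ∈ S :=
    fun v ⟨⟨n, hn⟩, hv⟩ => ⟨⟨pairSwap n, by rw [hsym, hn]⟩, (fiber_neg_infinite_iff hsym v).2 hv⟩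
  ext s
  refine (exists_congr fun M => and_congr_left' (forall₂_congr fun v _ => ?_)).trans
    (exists_intCombination_iff_exists_multiset hS s).symm
  exact ⟨fun h => ⟨let ⟨n, hn⟩ := h.nonempty; ⟨n, hn⟩, h⟩, fun h => h.2⟩

/-- The symmetric series built from positive reals `(u_k)`:
`y (2*k) = u k` and `y (2*k+1) = -u k` (0-indexed). -/
theorem SR2_separated_infinite_order (u : ℕ → ℝ) (hu : ∀ k, 0 < u k)
    (y : ℕ → ℝ) (hy : ∀ k : ℕ, y (2 * k) = u k ∧ y (2 * k + 1) = -u k)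
    (ε : ℝ) (hε : ε > 0)
    (hsep : IsSeparated' ε (Set.range u ∪ Set.range (fun k => -u k)))
    (hinf : ∃ e ∈ Set.range u ∪ Set.range (fun k => -u k),
      {n : ℕ | y n = e}.Infinite) :
    SR2 y = {s : ℝ | ∃ (r : ℕ) (e : Fin r → ℝ) (c : Fin r → ℤ),
      (∀ i, e i ∈ Set.range u ∪ Set.range (fun k => -u k) ∧
        {n : ℕ | y n = e i}.Infinite) ∧
      Even (∑ i, c i) ∧ s = ∑ i, (c i : ℝ) * e i} :=
  SR2_separated_infinite_order_general u hu y hy ε hε hsep
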